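/- Let p = 2l, 0 < η ≤ 1/(1000l), and ε > 0. For y ∈ Y and z ∈ ℝ^{d1}, set y⁺(z) := P_Y(y + η∇_y f(x*(y,z), y)). Then ‖x*(z) − x*(y⁺(z),z)‖² ≤ (6D(Y)/(lη²ε²))·‖y⁺(z) − y‖² + (2D(Y)/l)·ε². -/

import Mathlib

open Set Metric
open scoped RealInnerProductSpace

noncomputable def gradx {d1 d2 : ℕ}
    (f : EuclideanSpace ℝ (Fin d1) → EuclideanSpace ℝ (Fin d2) → ℝ)
    (x : EuclideanSpace ℝ (Fin d1)) (y : EuclideanSpace ℝ (Fin d2)) :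
    EuclideanSpace ℝ (Fin d1) :=
  gradient (fun x' => f x' y) x

noncomputable def grady {d1 d2 : ℕ}
    (f : EuclideanSpace ℝ (Fin d1) → EuclideanSpace ℝ (Fin d2) → ℝ)
    (x : EuclideanSpace ℝ (Fin d1)) (y : EuclideanSpace ℝ (Fin d2)) :
    EuclideanSpace ℝ (Fin d2) :=
  gradient (fun y' => f x y') y

/-- `f` is differentiable and `l`-smooth: the gradient is `l`-Lipschitz with respect to the
Euclidean norm on the product space (stated in squared form). -/
def IsLSmooth {d1 d2 : ℕ} (l : ℝ)
    (f : EuclideanSpace ℝ (Fin d1) → EuclideanSpace ℝ (Fin d2) → ℝ) : Prop :=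
  Differentiable ℝ (fun w : EuclideanSpace ℝ (Fin d1) × EuclideanSpace ℝ (Fin d2) => f w.1 w.2) ∧
  ∀ x₁ x₂ y₁ y₂,
    ‖gradx f x₁ y₁ - gradx f x₂ y₂‖ ^ 2 + ‖grady f x₁ y₁ - grady f x₂ y₂‖ ^ 2
      ≤ l ^ 2 * (‖x₁ - x₂‖ ^ 2 + ‖y₁ - y₂‖ ^ 2)

/-- `f̂(x, y, z) = f(x, y) + (p/2)‖x − z‖²`. -/
noncomputable def fhat {d1 d2 : ℕ}
    (f : EuclideanSpace ℝ (Fin d1) → EuclideanSpace ℝ (Fin d2) → ℝ) (p : ℝ)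
    (x : EuclideanSpace ℝ (Fin d1)) (y : EuclideanSpace ℝ (Fin d2))
    (z : EuclideanSpace ℝ (Fin d1)) : ℝ :=
  f x y + p / 2 * ‖x - z‖ ^ 2

/-! The function `Φ(·, z) = max_Y f̂(·, y, z)` is `l`-strongly convex as a supremum of
`(p - l)`-strongly convex functions, so the squared distance from its minimizer `x*(z)` to
`x₁ = x*(y⁺, z)` is at most `2/l` times the gap `f(x₁, y*(x₁)) - f(x₁, y⁺)`, and one-point-concavity
bounds that gap by `⟪∇_y f(x₁, y⁺), y*(x₁) - y⁺⟫`. The projection defining `y⁺` bounds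
`⟪∇_y f(x*(y, z), y), y*(x₁) - y⁺⟫` by `‖y⁺ - y‖ D(Y) / η`, and since `y ↦ x*(y, z)` is
`l/(p - l)`-Lipschitz the two gradients differ by at most `2 l ‖y⁺ - y‖`. Young's inequality with
weight `ε` turns the resulting linear bound in `‖y⁺ - y‖` into the stated one. -/

open Filter Topology

section Convexity

variable {E : Type*} [NormedAddCommGroup E]

theorem convexOn_univ_of_hasFDerivAt [NormedSpace ℝ E] {g : E → ℝ} {g' : E → StrongDual ℝ E}
    (hg : ∀ x, HasFDerivAt g (g' x) x) (hmono : ∀ x y, 0 ≤ (g' x - g' y) (x - y)) :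
    ConvexOn ℝ univ g := by
  refine ⟨convex_univ, fun a _ b _ s t hs ht hst => ?_⟩
  set ψ : ℝ → ℝ := fun τ => g (a + τ • (b - a))
  have hψ : ∀ τ, HasDerivAt ψ (g' (a + τ • (b - a)) (b - a)) τ := fun τ => by
    have hline : HasDerivAt (fun τ : ℝ => a + τ • (b - a)) (b - a) τ := by
      simpa using ((hasDerivAt_id τ).smul_const (b - a)).const_add a
    exact (hg _).comp_hasDerivAt τ hline
  have hψ' : Monotone fun τ : ℝ => g' (a + τ • (b - a)) (b - a) := by
    intro τ₁ τ₂ h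
    rcases h.lt_or_eq with h | rfl
    · have := hmono (a + τ₂ • (b - a)) (a + τ₁ • (b - a))
      rw [show a + τ₂ • (b - a) - (a + τ₁ • (b - a)) = (τ₂ - τ₁) • (b - a) by module, map_smul,
        smul_eq_mul, sub_apply] at this
      linarith [nonneg_of_mul_nonneg_right this (sub_pos.2 h)]
    · rfl
  have hconv : ConvexOn ℝ univ ψ := by
    refine MonotoneOn.convexOn_of_deriv convex_univ
      (continuous_iff_continuousAt.2 fun τ => (hψ τ).continuousAt).continuousOn
      (fun τ _ => (hψ τ).differentiableAt.differentiableWithinAt) ?_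
    rw [show deriv ψ = _ from funext fun τ => (hψ τ).deriv]
    exact hψ'.monotoneOn _
  have := hconv.2 (mem_univ 0) (mem_univ 1) hs ht hst
  simp only [ψ, smul_eq_mul, mul_zero, mul_one, zero_add, zero_smul, add_zero, one_smul,
    add_sub_cancel] at this
  rw [smul_eq_mul, smul_eq_mul]
  convert this using 2
  obtain rfl : s = 1 - t := by linarith
  module

theorem strongConvexOn_univ_of_hasFDerivAt [InnerProductSpace ℝ E] {g : E → ℝ}
    {g' : E → StrongDual ℝ E} {m : ℝ} (hg : ∀ x, HasFDerivAt g (g' x) x)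
    (hmono : ∀ x y, m * ‖x - y‖ ^ 2 ≤ (g' x - g' y) (x - y)) : StrongConvexOn univ m g := by
  refine strongConvexOn_iff_convex.2 (convexOn_univ_of_hasFDerivAt (fun x =>
    (hg x).sub (((hasStrictFDerivAt_norm_sq x).hasFDerivAt).const_mul (m / 2))) fun x y => ?_)
  have := hmono x y
  rw [← real_inner_self_eq_norm_sq] at this
  simp only [sub_apply, smul_apply, innerSL_apply_apply, nsmul_eq_mul, smul_eq_mul,
    inner_sub_left, inner_sub_right, real_inner_comm x y] at this ⊢
  nlinarith

theorem StrongConvexOn.mul_sq_norm_sub_le_sub [NormedSpace ℝ E] {s : Set E} {m : ℝ} {g : E → ℝ}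
    {x₀ x : E} (hg : StrongConvexOn s m g) (hmin : IsMinOn g s x₀) (hx₀ : x₀ ∈ s)
    (hx : x ∈ s) : m / 2 * ‖x - x₀‖ ^ 2 ≤ g x - g x₀ := by
  have key : ∀ t ∈ Ioo (0 : ℝ) 1, (1 - t) * (m / 2 * ‖x - x₀‖ ^ 2) ≤ g x - g x₀ := by
    rintro t ⟨ht0, ht1⟩
    have hconv := hg.2 hx₀ hx (sub_nonneg.2 ht1.le) ht0.le (by ring)
    have hmin' := hmin (hg.1 hx₀ hx (sub_nonneg.2 ht1.le) ht0.le (by ring))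
    rw [norm_sub_rev] at hconv
    simp only [smul_eq_mul, mem_ofPred_eq] at hconv hmin'
    nlinarith
  have hlim : Tendsto (fun t : ℝ => (1 - t) * (m / 2 * ‖x - x₀‖ ^ 2)) (𝓝[>] 0)
      (𝓝 (m / 2 * ‖x - x₀‖ ^ 2)) := by
    have : Continuous fun t : ℝ => (1 - t) * (m / 2 * ‖x - x₀‖ ^ 2) := by fun_prop
    simpa using (this.tendsto 0).mono_left nhdsWithin_le_nhds
  exact le_of_tendsto hlim (eventually_of_mem (Ioo_mem_nhdsGT one_pos) key)

theorem UniformConvexOn.csSup_image [NormedSpace ℝ E] {ι : Type*} {S : Set ι} {s : Set E}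
    {φ : ℝ → ℝ} {F : ι → E → ℝ} (hS : S.Nonempty) (hF : ∀ i ∈ S, UniformConvexOn s φ (F i))
    (hbdd : ∀ x ∈ s, BddAbove ((F · x) '' S)) :
    UniformConvexOn s φ fun x => sSup ((F · x) '' S) := by
  refine ⟨(hF _ hS.some_mem).1, fun x hx y hy a b ha hb hab => csSup_le (hS.image _) ?_⟩
  rintro _ ⟨i, hi, rfl⟩
  have hxi := le_csSup (hbdd x hx) (mem_image_of_mem (F · x) hi)
  have hyi := le_csSup (hbdd y hy) (mem_image_of_mem (F · y) hi)
  have hconv := (hF i hi).2 hx hy ha hb hab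
  simp only [smul_eq_mul] at *
  nlinarith [mul_le_mul_of_nonneg_left hxi ha, mul_le_mul_of_nonneg_left hyi hb]

theorem real_inner_sub_le_zero_of_forall_norm_sub_le [InnerProductSpace ℝ E] {K : Set E}
    (hK : Convex ℝ K) {u v : E} (hv : v ∈ K) (hmin : ∀ w ∈ K, ‖u - v‖ ≤ ‖u - w‖) {w : E}
    (hw : w ∈ K) : ⟪u - v, w - v⟫ ≤ 0 := by
  have : Nonempty K := ⟨⟨v, hv⟩⟩
  refine (norm_eq_iInf_iff_real_inner_le_zero hK hv).1 (le_antisymm ?_ ?_) w hw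
  · exact le_ciInf fun w => hmin w w.2
  · exact ciInf_le ⟨0, forall_mem_range.2 fun w : K => norm_nonneg (u - w)⟩ ⟨v, hv⟩

theorem real_inner_le_of_forall_norm_sub_le [InnerProductSpace ℝ E] {K : Set E}
    (hK : Convex ℝ K) {y g v w : E} {η : ℝ} (hv : v ∈ K)
    (hmin : ∀ w ∈ K, ‖y + η • g - v‖ ≤ ‖y + η • g - w‖) (hw : w ∈ K) :
    η * ⟪g, w - v⟫ ≤ ‖v - y‖ * ‖w - v‖ := by
  have hproj := real_inner_sub_le_zero_of_forall_norm_sub_le hK hv hmin hw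
  rw [show y + η • g - v = η • g - (v - y) by abel, inner_sub_left, real_inner_smul_left] at hproj
  linarith [real_inner_le_norm (v - y) (w - v)]

end Convexity

namespace IsLSmooth

variable {d1 d2 : ℕ} {l : ℝ} {f : EuclideanSpace ℝ (Fin d1) → EuclideanSpace ℝ (Fin d2) → ℝ}

theorem differentiable_left (hf : IsLSmooth l f) (y : EuclideanSpace ℝ (Fin d2)) :
    Differentiable ℝ (f · y) :=
  hf.1.comp (differentiable_id.prodMk (differentiable_const y))

theorem continuous_right (hf : IsLSmooth l f) (x : EuclideanSpace ℝ (Fin d1)) :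
    Continuous (f x) :=
  hf.1.continuous.comp (continuous_const.prodMk continuous_id)

theorem norm_gradx_sub_le (hf : IsLSmooth l f) (hl : 0 ≤ l) (x₁ x₂ y₁ y₂) :
    ‖gradx f x₁ y₁ - gradx f x₂ y₂‖ ≤ l * (‖x₁ - x₂‖ + ‖y₁ - y₂‖) := by
  refine le_of_pow_le_pow_left₀ two_ne_zero (by positivity) ?_
  nlinarith [hf.2 x₁ x₂ y₁ y₂, sq_nonneg ‖grady f x₁ y₁ - grady f x₂ y₂‖,
    mul_nonneg (sq_nonneg l) (mul_nonneg (norm_nonneg (x₁ - x₂)) (norm_nonneg (y₁ - y₂)))]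

theorem norm_grady_sub_le (hf : IsLSmooth l f) (hl : 0 ≤ l) (x₁ x₂ y₁ y₂) :
    ‖grady f x₁ y₁ - grady f x₂ y₂‖ ≤ l * (‖x₁ - x₂‖ + ‖y₁ - y₂‖) := by
  refine le_of_pow_le_pow_left₀ two_ne_zero (by positivity) ?_
  nlinarith [hf.2 x₁ x₂ y₁ y₂, sq_nonneg ‖gradx f x₁ y₁ - gradx f x₂ y₂‖,
    mul_nonneg (sq_nonneg l) (mul_nonneg (norm_nonneg (x₁ - x₂)) (norm_nonneg (y₁ - y₂)))]

theorem strongConvexOn_fhat (hf : IsLSmooth l f) (hl : 0 ≤ l) (p : ℝ)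
    (y : EuclideanSpace ℝ (Fin d2)) (z : EuclideanSpace ℝ (Fin d1)) :
    StrongConvexOn univ (p - l) (fhat f p · y z) := by
  refine strongConvexOn_univ_of_hasFDerivAt (g' := fun x =>
      InnerProductSpace.toDual ℝ _ (gradx f x y) + (p / 2) • 2 • innerSL ℝ (x - z))
    (fun x => ?_) fun x x' => ?_
  · exact (hf.differentiable_left y x).hasGradientAt.hasFDerivAt.add
      (((hasFDerivAt_id x).sub_const z).norm_sq.const_mul (p / 2))
  have hlip : ‖gradx f x y - gradx f x' y‖ ≤ l * ‖x - x'‖ := by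
    simpa using hf.norm_gradx_sub_le hl x x' y y
  have hgrad : -(l * ‖x - x'‖ ^ 2) ≤ ⟪gradx f x y, x - x'⟫ - ⟪gradx f x' y, x - x'⟫ := by
    rw [← inner_sub_left]
    nlinarith [neg_abs_le ⟪gradx f x y - gradx f x' y, x - x'⟫,
      abs_real_inner_le_norm (gradx f x y - gradx f x' y) (x - x'), norm_nonneg (x - x')]
  have hquad : ⟪x - z, x - x'⟫ - ⟪x' - z, x - x'⟫ = ‖x - x'‖ ^ 2 := by
    rw [← inner_sub_left, sub_sub_sub_cancel_right, real_inner_self_eq_norm_sq]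
  simp only [sub_apply, add_apply, smul_apply, InnerProductSpace.toDual_apply_apply,
    innerSL_apply_apply, smul_eq_mul, nsmul_eq_mul, Nat.cast_ofNat]
  linear_combination hgrad - p * hquad

theorem sub_sub_sub_le (hf : IsLSmooth l f) (hl : 0 ≤ l) (u v : EuclideanSpace ℝ (Fin d1))
    (y₁ y₂ : EuclideanSpace ℝ (Fin d2)) :
    f u y₁ - f u y₂ - (f v y₁ - f v y₂) ≤ l * ‖u - v‖ * ‖y₁ - y₂‖ := by
  have hderiv : ∀ x ∈ univ, HasFDerivWithinAt (fun x => f x y₁ - f x y₂)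
      (InnerProductSpace.toDual ℝ _ (gradx f x y₁) - InnerProductSpace.toDual ℝ _ (gradx f x y₂))
      univ x := fun x _ =>
    ((hf.differentiable_left y₁ x).hasGradientAt.hasFDerivAt.sub
      (hf.differentiable_left y₂ x).hasGradientAt.hasFDerivAt).hasFDerivWithinAt
  have hbound : ∀ x ∈ univ, ‖InnerProductSpace.toDual ℝ _ (gradx f x y₁) -
      InnerProductSpace.toDual ℝ _ (gradx f x y₂)‖ ≤ l * ‖y₁ - y₂‖ := fun x _ => by
    rw [← map_sub, LinearIsometryEquiv.norm_map]
    simpa using hf.norm_gradx_sub_le hl x x y₁ y₂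
  have := convex_univ.norm_image_sub_le_of_norm_hasFDerivWithin_le hderiv hbound
    (mem_univ v) (mem_univ u)
  linarith [le_abs_self (f u y₁ - f u y₂ - (f v y₁ - f v y₂)), Real.norm_eq_abs
    (f u y₁ - f u y₂ - (f v y₁ - f v y₂))]

theorem norm_sub_le_of_forall_fhat_le (hf : IsLSmooth l f) (hl : 0 ≤ l) {p : ℝ} (hp : l < p)
    {x₁ x₂ z : EuclideanSpace ℝ (Fin d1)} {y₁ y₂ : EuclideanSpace ℝ (Fin d2)}
    (hx₁ : ∀ x, fhat f p x₁ y₁ z ≤ fhat f p x y₁ z)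
    (hx₂ : ∀ x, fhat f p x₂ y₂ z ≤ fhat f p x y₂ z) :
    ‖x₁ - x₂‖ ≤ l / (p - l) * ‖y₁ - y₂‖ := by
  have h₁ := (hf.strongConvexOn_fhat hl p y₁ z).mul_sq_norm_sub_le_sub (fun x _ => hx₁ x)
    (mem_univ x₁) (mem_univ x₂)
  have h₂ := (hf.strongConvexOn_fhat hl p y₂ z).mul_sq_norm_sub_le_sub (fun x _ => hx₂ x)
    (mem_univ x₂) (mem_univ x₁)
  have hmixed := hf.sub_sub_sub_le hl x₁ x₂ y₂ y₁
  rw [norm_sub_rev x₂ x₁] at h₁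
  rw [norm_sub_rev y₂ y₁] at hmixed
  simp only [fhat] at h₁ h₂
  have hsq : (p - l) * ‖x₁ - x₂‖ ^ 2 ≤ l * ‖y₁ - y₂‖ * ‖x₁ - x₂‖ := by nlinarith
  rw [div_mul_eq_mul_div, le_div_iff₀ (sub_pos.2 hp)]
  rcases (norm_nonneg (x₁ - x₂)).eq_or_lt with h | h
  · rw [← h, zero_mul]; positivity
  · nlinarith

theorem strongConvexOn_sSup_fhat (hf : IsLSmooth l f) (hl : 0 ≤ l)
    {Y : Set (EuclideanSpace ℝ (Fin d2))} (hY : IsCompact Y) (hYne : Y.Nonempty) (p : ℝ)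
    (z : EuclideanSpace ℝ (Fin d1)) :
    StrongConvexOn univ (p - l) fun x => sSup ((fhat f p x · z) '' Y) :=
  UniformConvexOn.csSup_image hYne (fun y _ => hf.strongConvexOn_fhat hl p y z) fun x _ =>
    hY.bddAbove_image ((hf.continuous_right x).add continuous_const).continuousOn

theorem mul_sq_norm_sub_le_gap (hf : IsLSmooth l f) (hl : 0 ≤ l)
    {Y : Set (EuclideanSpace ℝ (Fin d2))} (hY : IsCompact Y) (hYne : Y.Nonempty) {p : ℝ}
    {x₀ x' z : EuclideanSpace ℝ (Fin d1)} {y' w : EuclideanSpace ℝ (Fin d2)} (hy' : y' ∈ Y)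
    (hw : ∀ y ∈ Y, f x₀ y ≤ f x₀ w) (hx₀ : ∀ x, fhat f p x₀ y' z ≤ fhat f p x y' z)
    (hx' : ∀ x, sSup ((fhat f p x' · z) '' Y) ≤ sSup ((fhat f p x · z) '' Y)) :
    (p - l) / 2 * ‖x₀ - x'‖ ^ 2 ≤ f x₀ w - f x₀ y' := by
  have hgrowth := (hf.strongConvexOn_sSup_fhat hl hY hYne p z).mul_sq_norm_sub_le_sub
    (fun x _ => hx' x) (mem_univ x') (mem_univ x₀)
  have hsup_le : sSup ((fhat f p x₀ · z) '' Y) ≤ f x₀ w + p / 2 * ‖x₀ - z‖ ^ 2 := by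
    refine csSup_le (hYne.image _) ?_
    rintro _ ⟨y, hy, rfl⟩
    simp only [fhat]
    linarith [hw y hy]
  have hle_sup : f x₀ y' + p / 2 * ‖x₀ - z‖ ^ 2 ≤ sSup ((fhat f p x' · z) '' Y) :=
    (hx₀ x').trans (le_csSup (hY.bddAbove_image ((hf.continuous_right x').add
      continuous_const).continuousOn) (mem_image_of_mem _ hy'))
  linarith

theorem inner_grady_le_of_projection (hf : IsLSmooth l f) (hl : 0 < l)
    {Y : Set (EuclideanSpace ℝ (Fin d2))} (hY : Convex ℝ Y) {η : ℝ} (hη : 0 < η)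
    {x₀ x₁ z : EuclideanSpace ℝ (Fin d1)} {y y₁ w : EuclideanSpace ℝ (Fin d2)} (hy₁ : y₁ ∈ Y)
    (hproj : ∀ v ∈ Y, ‖y + η • grady f x₀ y - y₁‖ ≤ ‖y + η • grady f x₀ y - v‖)
    (hx₀ : ∀ x, fhat f (2 * l) x₀ y z ≤ fhat f (2 * l) x y z)
    (hx₁ : ∀ x, fhat f (2 * l) x₁ y₁ z ≤ fhat f (2 * l) x y₁ z) (hw : w ∈ Y) :
    ⟪grady f x₁ y₁, w - y₁⟫ ≤ (1 / η + 2 * l) * ‖y₁ - y‖ * ‖w - y₁‖ := by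
  have hstep : ⟪grady f x₀ y, w - y₁⟫ ≤ ‖y₁ - y‖ * ‖w - y₁‖ / η := by
    rw [le_div_iff₀ hη, mul_comm]
    exact real_inner_le_of_forall_norm_sub_le hY hy₁ hproj hw
  have hx : ‖x₁ - x₀‖ ≤ ‖y₁ - y‖ := by
    simpa [show l / (2 * l - l) = 1 by field_simp; ring] using
      hf.norm_sub_le_of_forall_fhat_le hl.le (by linarith) hx₁ hx₀
  have herr : ‖grady f x₁ y₁ - grady f x₀ y‖ ≤ 2 * l * ‖y₁ - y‖ := by
    nlinarith [hf.norm_grady_sub_le hl.le x₁ x₀ y₁ y]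
  have hinner_err : ⟪grady f x₁ y₁ - grady f x₀ y, w - y₁⟫ ≤ 2 * l * ‖y₁ - y‖ * ‖w - y₁‖ :=
    (real_inner_le_norm _ _).trans (mul_le_mul_of_nonneg_right herr (norm_nonneg _))
  rw [← add_sub_cancel (grady f x₀ y) (grady f x₁ y₁), inner_add_left]
  linear_combination hstep + hinner_err

end IsLSmooth

theorem two_div_mul_le_young {l η ε D Δ : ℝ} (hl : 0 < l) (hη : 0 < η) (hlη : l * η ≤ 1 / 1000)
    (hε : 0 < ε) (hD : 0 ≤ D) (hΔ : 0 ≤ Δ) :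
    2 / l * ((1 / η + 2 * l) * Δ * D)
      ≤ 6 * D / (l * η ^ 2 * ε ^ 2) * Δ ^ 2 + 2 * D / l * ε ^ 2 := by
  set u := η * ε ^ 2
  have hu : 0 < u := by positivity
  have hexpand : 6 * D / (l * η ^ 2 * ε ^ 2) * Δ ^ 2 + 2 * D / l * ε ^ 2
      - 2 / l * ((1 / η + 2 * l) * Δ * D)
      = D * (6 * Δ ^ 2 + 2 * u ^ 2 - 2 * Δ * u - 4 * (l * η) * Δ * u) / (l * η ^ 2 * ε ^ 2) := by
    field_simp
    ring
  rw [← sub_nonneg, hexpand]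
  refine div_nonneg (mul_nonneg hD ?_) (by positivity)
  nlinarith [mul_le_mul_of_nonneg_right hlη (mul_nonneg hΔ hu.le), sq_nonneg (Δ - u)]

theorem statement10_general {d1 d2 : ℕ} (l η ε : ℝ) (hl : 0 < l) (hη : 0 < η)
    (hη' : η ≤ 1 / (1000 * l)) (hε : 0 < ε)
    (f : EuclideanSpace ℝ (Fin d1) → EuclideanSpace ℝ (Fin d2) → ℝ)
    (hf : IsLSmooth l f)
    (Y : Set (EuclideanSpace ℝ (Fin d2))) (hYne : Y.Nonempty) (hYconv : Convex ℝ Y)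
    (hYcomp : IsCompact Y)
    (projY : EuclideanSpace ℝ (Fin d2) → EuclideanSpace ℝ (Fin d2))
    (hprojY_mem : ∀ v, projY v ∈ Y)
    (hprojY : ∀ v, ∀ w ∈ Y, ‖v - projY v‖ ≤ ‖v - w‖)
    -- one-point-concavity of `f` in `y` on `Y`
    (ystar : EuclideanSpace ℝ (Fin d1) → EuclideanSpace ℝ (Fin d2))
    (hystar_mem : ∀ x, ystar x ∈ Y)
    (hystar : ∀ x, ∀ y ∈ Y, f x y ≤ f x (ystar x))
    (hOPC : ∀ x, ∀ y ∈ Y, ⟪grady f x y, y - ystar x⟫ ≤ f x y - f x (ystar x))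
    -- `x*(y, z)`: minimizer of `x ↦ f̂(x, y, z)` with `p = 2l`
    (xstar : EuclideanSpace ℝ (Fin d2) → EuclideanSpace ℝ (Fin d1) → EuclideanSpace ℝ (Fin d1))
    (hxstar : ∀ y z x, fhat f (2 * l) (xstar y z) y z ≤ fhat f (2 * l) x y z)
    -- `x*(z)`: minimizer of `x ↦ Φ(x,z) = max_{y∈Y} f̂(x,y,z)`
    (xstarz : EuclideanSpace ℝ (Fin d1) → EuclideanSpace ℝ (Fin d1))
    (hxstarz : ∀ z x, sSup ((fun y => fhat f (2 * l) (xstarz z) y z) '' Y)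
        ≤ sSup ((fun y => fhat f (2 * l) x y z) '' Y))
    (y : EuclideanSpace ℝ (Fin d2)) (z : EuclideanSpace ℝ (Fin d1)) :
    ‖xstarz z - xstar (projY (y + η • grady f (xstar y z) y)) z‖ ^ 2
      ≤ 6 * diam Y / (l * η ^ 2 * ε ^ 2)
          * ‖projY (y + η • grady f (xstar y z) y) - y‖ ^ 2
        + 2 * diam Y / l * ε ^ 2 := by
  set g := grady f (xstar y z) y
  set y₁ := projY (y + η • g)
  set x₁ := xstar y₁ z
  set w := ystar x₁
  have hy₁ : y₁ ∈ Y := hprojY_mem _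
  have hdiam : ‖w - y₁‖ ≤ diam Y := by
    rw [← dist_eq_norm]
    exact dist_le_diam_of_mem hYcomp.isBounded (hystar_mem _) hy₁
  have hgap : l / 2 * ‖xstarz z - x₁‖ ^ 2 ≤ ⟪grady f x₁ y₁, w - y₁⟫ := by
    have h := hf.mul_sq_norm_sub_le_gap hl.le hYcomp hYne hy₁ (hystar x₁) (hxstar y₁ z)
      (hxstarz z)
    have hopc := hOPC x₁ y₁ hy₁
    rw [← neg_sub w y₁, inner_neg_right] at hopc
    rw [norm_sub_rev, show 2 * l - l = l by ring] at h
    linarith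
  have hstep : ⟪grady f x₁ y₁, w - y₁⟫ ≤ (1 / η + 2 * l) * ‖y₁ - y‖ * diam Y :=
    (hf.inner_grady_le_of_projection hl hYconv hη hy₁ (hprojY _) (hxstar y z) (hxstar y₁ z)
      (hystar_mem x₁)).trans (by gcongr)
  have hlη : l * η ≤ 1 / 1000 := by
    rw [le_div_iff₀ (by positivity)] at hη'
    linarith
  calc _ = 2 / l * (l / 2 * ‖xstarz z - x₁‖ ^ 2) := by field_simp
    _ ≤ 2 / l * ((1 / η + 2 * l) * ‖y₁ - y‖ * diam Y) :=
      mul_le_mul_of_nonneg_left (hgap.trans hstep) (by positivity)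
    _ ≤ _ := two_div_mul_le_young hl hη hlη hε diam_nonneg (norm_nonneg _)

/-- with `p = 2l`, `0 < η ≤ 1/(1000l)`, `ε > 0`,
`‖x*(z) − x*(y⁺(z),z)‖² ≤ (6D(Y)/(lη²ε²))‖y⁺(z) − y‖² + (2D(Y)/l)ε²`
where `y⁺(z) = P_Y(y + η∇_y f(x*(y,z), y))`. -/
theorem statement10 {d1 d2 : ℕ} (l η ε : ℝ) (hl : 0 < l) (hη : 0 < η)
    (hη' : η ≤ 1 / (1000 * l)) (hε : 0 < ε)
    (f : EuclideanSpace ℝ (Fin d1) → EuclideanSpace ℝ (Fin d2) → ℝ)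
    (hf : IsLSmooth l f)
    (Y : Set (EuclideanSpace ℝ (Fin d2))) (hYne : Y.Nonempty) (hYconv : Convex ℝ Y)
    (hYcomp : IsCompact Y)
    (projY : EuclideanSpace ℝ (Fin d2) → EuclideanSpace ℝ (Fin d2))
    (hprojY_mem : ∀ v, projY v ∈ Y)
    (hprojY : ∀ v, ∀ w ∈ Y, ‖v - projY v‖ ≤ ‖v - w‖)
    -- one-point-concavity of `f` in `y` on `Y`
    (ystar : EuclideanSpace ℝ (Fin d1) → EuclideanSpace ℝ (Fin d2))
    (hystar_mem : ∀ x, ystar x ∈ Y)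
    (hystar : ∀ x, ∀ y ∈ Y, f x y ≤ f x (ystar x))
    (hOPC : ∀ x, ∀ y ∈ Y, ⟪grady f x y, y - ystar x⟫ ≤ f x y - f x (ystar x))
    -- `x*(y, z)`: minimizer of `x ↦ f̂(x, y, z)` with `p = 2l`
    (xstar : EuclideanSpace ℝ (Fin d2) → EuclideanSpace ℝ (Fin d1) → EuclideanSpace ℝ (Fin d1))
    (hxstar : ∀ y z x, fhat f (2 * l) (xstar y z) y z ≤ fhat f (2 * l) x y z)
    -- `x*(z)`: minimizer of `x ↦ Φ(x,z) = max_{y∈Y} f̂(x,y,z)`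
    (xstarz : EuclideanSpace ℝ (Fin d1) → EuclideanSpace ℝ (Fin d1))
    (hxstarz : ∀ z x, sSup ((fun y => fhat f (2 * l) (xstarz z) y z) '' Y)
        ≤ sSup ((fun y => fhat f (2 * l) x y z) '' Y))
    (y : EuclideanSpace ℝ (Fin d2)) (hy : y ∈ Y) (z : EuclideanSpace ℝ (Fin d1)) :
    ‖xstarz z - xstar (projY (y + η • grady f (xstar y z) y)) z‖ ^ 2
      ≤ 6 * diam Y / (l * η ^ 2 * ε ^ 2)
          * ‖projY (y + η • grady f (xstar y z) y) - y‖ ^ 2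
        + 2 * diam Y / l * ε ^ 2 :=
  statement10_general l η ε hl hη hη' hε f hf Y hYne hYconv hYcomp projY hprojY_mem hprojY ystar
    hystar_mem hystar hOPC xstar hxstar xstarz hxstarz y z
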